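/- Let R be an H-module algebra, B an H-ideal of R, and C an H-ideal of B. Then (C)³ ⊆ C, where (C) is the H-ideal of R generated by C. -/

import Mathlib

open scoped TensorProduct

class HModAlg (k H R : Type*) [CommRing k] [Ring H] [Algebra k H]
    [Coalgebra k H] [NonUnitalRing R] [Module k R]
    [SMulCommClass k R R] [IsScalarTower k R R] where
  hsmul : H →ₗ[k] R →ₗ[k] R
  one_hsmul : ∀ r : R, hsmul 1 r = r
  mul_hsmul : ∀ (h h' : H) (r : R), hsmul (h * h') r = hsmul h (hsmul h' r)
  hsmul_mul : ∀ (h : H) (a b : R),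
    hsmul h (a * b) =
      LinearMap.mul' k R
        (TensorProduct.map (hsmul.flip a) (hsmul.flip b) (Coalgebra.comul h))

/-- product f 0 * f 1 * ⋯ * f n -/
def prodSeq {R : Type*} [Mul R] (f : ℕ → R) : ℕ → R
  | 0 => f 0
  | n + 1 => prodSeq f n * f (n + 1)

/-- `I` is a nilpotent subset: some power of it vanishes. -/
def IsNilpotentSet {R : Type*} [Mul R] [Zero R] (I : Set R) : Prop :=
  ∃ n : ℕ, ∀ f : ℕ → R, (∀ i, f i ∈ I) → prodSeq f n = 0

/-- `I` is nilpotent modulo `J`. -/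
def IsNilpotentSetMod {R : Type*} [Mul R] (I J : Set R) : Prop :=
  ∃ n : ℕ, ∀ f : ℕ → R, (∀ i, f i ∈ I) → prodSeq f n ∈ J

section Defs

variable (k H : Type*) {R : Type*} [CommRing k] [Ring H] [Algebra k H]
  [Coalgebra k H] [NonUnitalRing R] [Module k R]
  [SMulCommClass k R R] [IsScalarTower k R R] [HModAlg k H R]

/-- The action of `h : H` on `r : R`. -/
def hact (h : H) (r : R) : R := HModAlg.hsmul (k := k) h r

/-- `I` is an `H`-ideal of the `H`-module (sub)algebra `B ⊆ R`. -/
structure IsHIdealIn (B I : Set R) : Prop where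
  subset : I ⊆ B
  zero_mem : (0 : R) ∈ I
  add_mem : ∀ {x y : R}, x ∈ I → y ∈ I → x + y ∈ I
  neg_mem : ∀ {x : R}, x ∈ I → -x ∈ I
  mul_mem_left : ∀ {x : R}, x ∈ B → ∀ {y : R}, y ∈ I → x * y ∈ I
  mul_mem_right : ∀ {x : R}, x ∈ I → ∀ {y : R}, y ∈ B → x * y ∈ I
  hsmul_mem : ∀ (h : H) {x : R}, x ∈ I → hact k H h x ∈ I

/-- `I` is an `H`-ideal of `R`. -/
def IsHIdeal (I : Set R) : Prop := IsHIdealIn k H Set.univ I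

/-- `R` is `H`-semiprime. -/
def IsHSemiprime : Prop :=
  ∀ I : Set R, IsHIdeal k H I → IsNilpotentSet I → I = {0}

/-- The subalgebra `B` of `R` is `H`-semiprime. -/
def IsHSemiprimeIn (B : Set R) : Prop :=
  ∀ I : Set R, IsHIdealIn k H B I → IsNilpotentSet I → I = {0}

/-- `R` is `H`-prime. -/
def IsHPrime : Prop :=
  ∀ I J : Set R, IsHIdeal k H I → IsHIdeal k H J →
    (∀ a ∈ I, ∀ b ∈ J, a * b = 0) → I = {0} ∨ J = {0}

/-- The `H`-ideal of `R` generated by `E`. -/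
def genHIdeal (E : Set R) : Set R := ⋂₀ {I : Set R | IsHIdeal k H I ∧ E ⊆ I}

end Defs

/-!
Let `J = {y ∈ R | B y B ⊆ C}`; since `B` is an ideal of `R` and `C` an ideal of `B`, `J` is an
ideal of `R` containing `C`. Its `H`-core `(J : H) = {y | H·y ⊆ J}` is an `H`-ideal of `R`
(the comultiplication lets `H` act on a product factor by factor), and it contains the `H`-stable
set `C`. Hence `(C) ⊆ (J : H) ⊆ J`, and `(C) ⊆ B`, so `(C)(C)(C) ⊆ B J B ⊆ C`.
-/

section HCore

variable {k H R : Type*} [CommRing k] [Ring H] [Algebra k H] [Coalgebra k H]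
    [NonUnitalRing R] [Module k R] [SMulCommClass k R R] [IsScalarTower k R R]
    [HModAlg k H R]

lemma hact_mul_mem {S : Type*} [SetLike S R] [AddSubmonoidClass S R] (P : S) (h : H) {a b : R}
    (hab : ∀ h₁ h₂ : H, hact k H h₁ a * hact k H h₂ b ∈ P) :
    hact k H h (a * b) ∈ P := by
  rw [hact, HModAlg.hsmul_mul]
  induction Coalgebra.comul (R := k) h with
  | zero => simp [zero_mem]
  | tmul h₁ h₂ => simpa [hact] using hab h₁ h₂
  | add s t hs ht => simpa only [map_add] using add_mem hs ht

lemma hact_one (x : R) : hact k H 1 x = x := HModAlg.one_hsmul x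

lemma hact_mul (h h' : H) (x : R) : hact k H (h * h') x = hact k H h (hact k H h' x) :=
  HModAlg.mul_hsmul h h' x

variable (k H)

/-- The `H`-core `(I : H)` of a two-sided ideal `I`: the largest `H`-ideal contained in `I`. -/
def hCore (I : TwoSidedIdeal R) : TwoSidedIdeal R :=
  .mk' {y | ∀ h : H, hact k H h y ∈ I}
    (fun h => by simp [hact, I.zero_mem])
    (fun hx hy h => by simpa [hact] using I.add_mem (hx h) (hy h))
    (fun hx h => by simpa [hact] using I.neg_mem (hx h))
    (fun hy h => hact_mul_mem I h fun _ h₂ => I.mul_mem_left _ _ (hy h₂))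
    (fun hx h => hact_mul_mem I h fun h₁ _ => I.mul_mem_right _ _ (hx h₁))

variable {k H}

lemma mem_hCore {I : TwoSidedIdeal R} {y : R} : y ∈ hCore k H I ↔ ∀ h : H, hact k H h y ∈ I :=
  TwoSidedIdeal.mem_mk' ..

lemma hCore_le (I : TwoSidedIdeal R) : hCore k H I ≤ I := fun y hy => by
  simpa [hact_one] using mem_hCore.mp hy 1

lemma isHIdeal_hCore (I : TwoSidedIdeal R) : IsHIdeal k H (hCore k H I : Set R) where
  subset := Set.subset_univ _
  zero_mem := zero_mem _
  add_mem := add_mem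
  neg_mem := neg_mem
  mul_mem_left _ _ hy := TwoSidedIdeal.mul_mem_left _ _ _ hy
  mul_mem_right hx _ _ := TwoSidedIdeal.mul_mem_right _ _ _ hx
  hsmul_mem h' _ hy := mem_hCore.mpr fun h => by simpa [hact_mul] using mem_hCore.mp hy (h * h')

lemma subset_hCore {E : Set R} {I : TwoSidedIdeal R}
    (hE : ∀ (h : H) {x : R}, x ∈ E → hact k H h x ∈ E) (hEI : E ⊆ I) :
    E ⊆ hCore k H I := fun _ hx => mem_hCore.mpr fun h => hEI (hE h hx)

lemma genHIdeal_subset {E I : Set R} (hI : IsHIdeal k H I) (hEI : E ⊆ I) :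
    genHIdeal k H E ⊆ I := Set.sInter_subset_of_mem ⟨hI, hEI⟩

end HCore

section Sandwich

variable {R : Type*} [NonUnitalRing R]

def sandwichIdeal (B : TwoSidedIdeal R) (C : AddSubgroup R) : TwoSidedIdeal R :=
  .mk' {y | ∀ x ∈ B, ∀ z ∈ B, x * y * z ∈ C}
    (fun x _ z _ => by simp [C.zero_mem])
    (fun hy hy' x hx z hz => by
      simpa [mul_add, add_mul] using C.add_mem (hy x hx z hz) (hy' x hx z hz))
    (fun hy x hx z hz => by simpa using C.neg_mem (hy x hx z hz))
    (fun {r y} hy x hx z hz => by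
      simpa [mul_assoc] using hy (x * r) (B.mul_mem_right _ _ hx) z hz)
    (fun {y r} hy x hx z hz => by
      simpa [mul_assoc] using hy x hx (r * z) (B.mul_mem_left _ _ hz))

lemma mem_sandwichIdeal {B : TwoSidedIdeal R} {C : AddSubgroup R} {y : R} :
    y ∈ sandwichIdeal B C ↔ ∀ x ∈ B, ∀ z ∈ B, x * y * z ∈ C :=
  TwoSidedIdeal.mem_mk' ..

end Sandwich

section HIdeal

variable {k H R : Type*} [CommRing k] [Ring H] [Algebra k H] [Coalgebra k H]
    [NonUnitalRing R] [Module k R] [SMulCommClass k R R] [IsScalarTower k R R]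
    [HModAlg k H R] {B C : Set R}

def IsHIdeal.toTwoSidedIdeal (hB : IsHIdeal k H B) : TwoSidedIdeal R :=
  .mk' B hB.zero_mem hB.add_mem hB.neg_mem (hB.mul_mem_left trivial) (hB.mul_mem_right · trivial)

lemma IsHIdeal.mem_toTwoSidedIdeal (hB : IsHIdeal k H B) {x : R} :
    x ∈ hB.toTwoSidedIdeal ↔ x ∈ B :=
  TwoSidedIdeal.mem_mk' ..

def IsHIdealIn.toAddSubgroup (hC : IsHIdealIn k H B C) : AddSubgroup R where
  carrier := C
  zero_mem' := hC.zero_mem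
  add_mem' := hC.add_mem
  neg_mem' := hC.neg_mem

lemma IsHIdealIn.subset_sandwichIdeal (hB : IsHIdeal k H B) (hC : IsHIdealIn k H B C) :
    C ⊆ sandwichIdeal hB.toTwoSidedIdeal hC.toAddSubgroup := fun _ hy =>
  mem_sandwichIdeal.mpr fun _ hx _ hz =>
    hC.mul_mem_right (hC.mul_mem_left (hB.mem_toTwoSidedIdeal.mp hx) hy)
      (hB.mem_toTwoSidedIdeal.mp hz)

end HIdeal

/-- if `B` is an `H`-ideal of `R` and `C` an `H`-ideal of `B`, then
`(C)³ ⊆ C` where `(C)` is the `H`-ideal of `R` generated by `C`. -/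
theorem stmt2 {k H R : Type*} [CommRing k] [Ring H] [Algebra k H] [Coalgebra k H]
    [NonUnitalRing R] [Module k R] [SMulCommClass k R R] [IsScalarTower k R R]
    [HModAlg k H R] (B C : Set R)
    (hB : IsHIdeal k H B) (hC : IsHIdealIn k H B C) :
    ∀ x ∈ genHIdeal k H C, ∀ y ∈ genHIdeal k H C, ∀ z ∈ genHIdeal k H C,
      x * y * z ∈ C := by
  set J := sandwichIdeal hB.toTwoSidedIdeal hC.toAddSubgroup
  have hgen_B : genHIdeal k H C ⊆ B := genHIdeal_subset hB hC.subset
  have hgen_J : genHIdeal k H C ⊆ J :=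
    (genHIdeal_subset (isHIdeal_hCore J) (subset_hCore hC.hsmul_mem
      (hC.subset_sandwichIdeal hB))).trans (hCore_le J)
  intro x hx y hy z hz
  exact mem_sandwichIdeal.mp (hgen_J hy) x (hB.mem_toTwoSidedIdeal.mpr (hgen_B hx))
    z (hB.mem_toTwoSidedIdeal.mpr (hgen_B hz))
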